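/- Let p be a prime, n ≥ 1, y ∈ ℚ_p^n, t = (t₀, …, t_n) ∈ ℤ_{≥0}^{n+1} with t = Σᵢ tᵢ > 0, and 0 < γ < 1/(n+1). Let q̃' = (q₀', q') with q₀' ∈ ℤ[1/p] and q' = (q₁', …, q_n') ∈ ℤ^n, q̃' ≠ 0, and suppose that max( p^{t}|q₀' + q'·y|_p · max_{0 ≤ i ≤ n} p^{-t_i}|q_i'|_∞ , max_{0 ≤ i ≤ n} p^{-t_i}|q_i'|_∞ ) ≤ p^{-γt}. Let k = #{i : tᵢ ≥ γt} and m = #{i : q_i' ≠ 0}. Then |q₀' + q'·y|_p ≤ Π_+(q̃')^{-(mγ + m - kγ)/(m(1 - kγ))}. -/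

import Mathlib

open MeasureTheory Metric
open scoped ENNReal NNReal

namespace PadicDioph

variable (p : ℕ) [Fact p.Prime]

noncomputable instance : MeasurableSpace ℚ_[p] := borel _
instance : BorelSpace ℚ_[p] := ⟨rfl⟩

/-- Membership in `ℤ[1/p]`, viewed inside `ℚ`. -/
def IsZInvP (q : ℚ) : Prop := ∃ (z : ℤ) (k : ℕ), q = (z : ℚ) / (p : ℚ) ^ k

/-- Sup norm (max of archimedean absolute values) of a finite tuple of rationals. -/
noncomputable def supNormR {m : ℕ} (q : Fin m → ℚ) : ℝ := ⨆ i, |(q i : ℝ)|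

/-- Sup of the `p`-adic absolute values of a finite tuple of rationals. -/
noncomputable def supNormP {m : ℕ} (q : Fin m → ℚ) : ℝ := ⨆ i, ‖((q i : ℚ_[p]))‖

/-- Sup norm of an integer tuple together with an extra integer coordinate. -/
noncomputable def supNormZ {n : ℕ} (q0 : ℤ) (q : Fin n → ℤ) : ℝ :=
  max |(q0 : ℝ)| (⨆ i, |((q i : ℤ) : ℝ)|)

/-- The classical Diophantine exponent `w(y)` of `y ∈ ℚ_p^n`: the supremum of all `v > 0`
such that `|q₀ + q·y|_p ≤ ‖(q₀,q)‖_∞^{-v}` has infinitely many integer solutions. -/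
noncomputable def wExp {n : ℕ} (y : Fin n → ℚ_[p]) : ℝ≥0∞ :=
  ⨆ (v : ℝ) (_ : 0 < v ∧
    {qq : ℤ × (Fin n → ℤ) |
      ‖((qq.1 : ℚ_[p]) + ∑ i, (qq.2 i : ℚ_[p]) * y i)‖ ≤
        (supNormZ qq.1 qq.2) ^ (-v)}.Infinite), ENNReal.ofReal v

/-- `y` is very well approximable if `w(y) > n + 1`. -/
def IsVWA {n : ℕ} (y : Fin n → ℚ_[p]) : Prop :=
  ENNReal.ofReal ((n : ℝ) + 1) < wExp p y

/-- The defining condition of the exponent `w_p`: there are solutions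
`q̃ = (q₀, q) ∈ ℤ[1/p]^{n+1}` of `|q·y + q₀|_p < (‖q‖_p ‖q̃‖_∞)^{-v} ‖q̃‖_∞^{-1}`
with `‖q‖_p ‖q̃‖_∞` arbitrarily large. -/
def WpCond {n : ℕ} (y : Fin n → ℚ_[p]) (v : ℝ) : Prop :=
  ∀ T : ℝ, ∃ (q0 : ℚ) (q : Fin n → ℚ),
    IsZInvP p q0 ∧ (∀ i, IsZInvP p (q i)) ∧
    T < supNormP p q * supNormR (Fin.cons q0 q) ∧
    ‖(∑ i, (q i : ℚ_[p]) * y i) + (q0 : ℚ_[p])‖ <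
      (supNormP p q * supNormR (Fin.cons q0 q)) ^ (-v) * (supNormR (Fin.cons q0 q))⁻¹

/-- The exponent `w_p(y)`. -/
noncomputable def wpExp {n : ℕ} (y : Fin n → ℚ_[p]) : ℝ≥0∞ :=
  ⨆ (v : ℝ) (_ : 0 < v ∧ WpCond p y v), ENNReal.ofReal v

/-- `Π_+` of a tuple of rationals: the product of `|q_i|_∞` over the nonzero coordinates. -/
noncomputable def piPlusQ {m : ℕ} (q : Fin m → ℚ) : ℝ :=
  ∏ i, (if q i = 0 then 1 else |(q i : ℝ)|)

/-- `Π_+` of `(q₀, q)` with integer coordinates. -/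
noncomputable def piPlusZ {n : ℕ} (q0 : ℤ) (q : Fin n → ℤ) : ℝ :=
  (if q0 = 0 then 1 else |(q0 : ℝ)|) * ∏ i, (if q i = 0 then 1 else |((q i : ℤ) : ℝ)|)

/-- `y ∈ ℚ_p^n` is very well multiplicatively approximable. -/
def IsVWMA {n : ℕ} (y : Fin n → ℚ_[p]) : Prop :=
  ∃ ε : ℝ, 0 < ε ∧
    {qq : ℤ × (Fin n → ℤ) |
      ‖((qq.1 : ℚ_[p]) + ∑ i, (qq.2 i : ℚ_[p]) * y i)‖ ≤
        (piPlusZ qq.1 qq.2) ^ (-(1 + ε))}.Infinite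

/-- A measure on `ℚ_p^n` is strongly extremal if almost every point is not VWMA. -/
def StronglyExtremal {n : ℕ} (μ : Measure (Fin n → ℚ_[p])) : Prop :=
  ∀ᵐ y ∂μ, ¬ IsVWMA p y

/-- `δ(g_t u_y D^{n+1})` for the one-parameter flow: `g_t` has `p`-adic component
`diag(p^{-t},1,…,1)` and archimedean component `p^{-t/(n+1)}·Id`. -/
noncomputable def deltaOne {n : ℕ} (y : Fin n → ℚ_[p]) (t : ℕ) : ℝ :=
  sInf { c : ℝ | ∃ qt : Fin (n + 1) → ℚ, (∀ i, IsZInvP p (qt i)) ∧ qt ≠ 0 ∧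
    c = ((p : ℝ) ^ (-(t : ℝ) / ((n : ℝ) + 1)) * supNormR qt) *
        max (‖(((p : ℚ_[p]) ^ t)⁻¹ * ((qt 0 : ℚ_[p]) + ∑ i : Fin n, (qt i.succ : ℚ_[p]) * y i))‖)
            (⨆ i : Fin n, ‖((qt i.succ : ℚ_[p]))‖) }

/-- The exponent `γ(y)`. -/
noncomputable def gammaExp {n : ℕ} (y : Fin n → ℚ_[p]) : ℝ :=
  sSup {c : ℝ | 0 ≤ c ∧ ∀ N : ℕ, ∃ t : ℕ, N ≤ t ∧
    deltaOne p y t ≤ (p : ℝ) ^ (-(c * (t : ℝ)))}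

/-- `δ(g_t u_y D^{n+1})` for the multiparameter flow: for `t = (t₀,…,t_n)` with
`T = Σ tᵢ`, the `p`-adic component of `g_t` is `diag(p^{-T},1,…,1)` and the archimedean
component is `diag(p^{-t₀},…,p^{-t_n})`. -/
noncomputable def deltaMulti {n : ℕ} (y : Fin n → ℚ_[p]) (t : Fin (n + 1) → ℕ) : ℝ :=
  sInf { c : ℝ | ∃ qt : Fin (n + 1) → ℚ, (∀ i, IsZInvP p (qt i)) ∧ qt ≠ 0 ∧
    c = (⨆ i, (p : ℝ) ^ (-((t i : ℝ))) * |(qt i : ℝ)|) *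
        max (‖(((p : ℚ_[p]) ^ (∑ i, t i))⁻¹ *
              ((qt 0 : ℚ_[p]) + ∑ i : Fin n, (qt i.succ : ℚ_[p]) * y i))‖)
            (⨆ i : Fin n, ‖((qt i.succ : ℚ_[p]))‖) }

/-- The support of a measure on a metric space. -/
def measSupp {X : Type*} [MetricSpace X] [MeasurableSpace X] (μ : Measure X) : Set X :=
  {x | ∀ r : ℝ, 0 < r → 0 < μ (ball x r)}

/-- `‖f‖_{μ,B}`. -/
noncomputable def muSupNorm {X : Type*} [MetricSpace X] [MeasurableSpace X]
    (μ : Measure X) (B : Set X) (f : X → ℚ_[p]) : ℝ :=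
  sSup {c : ℝ | 0 < μ {x ∈ B | c < ‖f x‖}}

/-- `f` is `(C, α)`-good on `V` with respect to `μ`. -/
def IsGoodOn {X : Type*} [MetricSpace X] [MeasurableSpace X] (μ : Measure X)
    (C a : ℝ) (V : Set X) (f : X → ℚ_[p]) : Prop :=
  ∀ (x₀ : X) (r : ℝ), 0 < r → x₀ ∈ measSupp μ → ball x₀ r ⊆ V →
    ∀ ε : ℝ, 0 < ε →
      μ {x ∈ ball x₀ r | ‖f x‖ < ε} ≤
        ENNReal.ofReal (C * (ε / muSupNorm p μ (ball x₀ r) f) ^ a) * μ (ball x₀ r)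

/-- A metric space is Besicovitch: any family of balls whose centers exhaust a bounded
set `A` admits a countable subfamily covering `A` with multiplicity at most `N`. -/
def IsBesicovitch (X : Type*) [MetricSpace X] : Prop :=
  ∃ N : ℕ, ∀ (A : Set X), Bornology.IsBounded A →
    ∀ F : Set (X × ℝ), (∀ b ∈ F, 0 < b.2) → (∀ x ∈ A, ∃ r : ℝ, (x, r) ∈ F) →
      ∃ S ⊆ F, S.Countable ∧ (∀ x ∈ A, ∃ b ∈ S, x ∈ ball b.1 b.2) ∧
        ∀ x : X, {b ∈ S | x ∈ ball b.1 b.2}.encard ≤ N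

/-- `μ` is `D`-Federer on the open set `U`. -/
def IsDFedererOn {X : Type*} [MetricSpace X] [MeasurableSpace X]
    (μ : Measure X) (D : ℝ) (U : Set X) : Prop :=
  ∀ x ∈ measSupp μ, ∀ r : ℝ, 0 < r → ball x (3 * r) ⊆ U →
    μ (ball x (3 * r)) ≤ ENNReal.ofReal D * μ (ball x r)

/-- `μ` is Federer. -/
def IsFederer {X : Type*} [MetricSpace X] [MeasurableSpace X] (μ : Measure X) : Prop :=
  ∀ᵐ x ∂μ, ∃ U : Set X, IsOpen U ∧ x ∈ U ∧ 0 < μ U ∧ ∃ D : ℝ, 0 < D ∧ IsDFedererOn μ D U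

/-- The pair `(f, μ)` is good: `μ`-a.e. point has a neighbourhood `V` and `C, α > 0`
such that every affine combination `c₀ + Σ cᵢ fᵢ` is `(C, α)`-good on `V` w.r.t. `μ`. -/
def GoodPair {X : Type*} [MetricSpace X] [MeasurableSpace X] {n : ℕ}
    (f : X → (Fin n → ℚ_[p])) (μ : Measure X) : Prop :=
  ∀ᵐ x ∂μ, ∃ V : Set X, IsOpen V ∧ x ∈ V ∧ ∃ C a : ℝ, 0 < C ∧ 0 < a ∧
    ∀ c0 : ℚ_[p], ∀ c : Fin n → ℚ_[p],
      IsGoodOn p μ C a V (fun x => c0 + ∑ i, c i * f x i)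

/-- `(f, μ)` is nonplanar in the affine subspace `L`. -/
def NonplanarIn {X : Type*} [MetricSpace X] [MeasurableSpace X] {n : ℕ}
    (f : X → (Fin n → ℚ_[p])) (μ : Measure X)
    (L : AffineSubspace ℚ_[p] (Fin n → ℚ_[p])) : Prop :=
  ∀ B : Set X, IsOpen B → B.Nonempty → 0 < μ B →
    affineSpan ℚ_[p] (f '' (B ∩ measSupp μ)) = L

/-- `f` is nondegenerate in the affine subspace `L` at `x`: `f` takes values in `L` and the
span of the partial derivatives of `f` at `x` up to some order is the linear part of `L`. -/
def NondegenerateAt {d n : ℕ} (f : (Fin d → ℚ_[p]) → (Fin n → ℚ_[p]))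
    (L : AffineSubspace ℚ_[p] (Fin n → ℚ_[p])) (x : Fin d → ℚ_[p]) : Prop :=
  (∀ u, f u ∈ L) ∧ ∃ m : ℕ,
    Submodule.span ℚ_[p]
      {v : Fin n → ℚ_[p] | ∃ j : ℕ, j ≤ m ∧ 1 ≤ j ∧ ∃ vs : Fin j → (Fin d → ℚ_[p]),
        v = iteratedFDeriv ℚ_[p] j f x vs} = L.direction

/-- An analytic chart of the `d`-dimensional submanifold `M` of `ℚ_p^n`: an analytic map
`f` on an open set `U`, injective on `U`, immersive, a homeomorphism onto its image, whose
image is a relatively open subset of `M`. -/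
def IsChart (d n : ℕ) (M : Set (Fin n → ℚ_[p]))
    (U : Set (Fin d → ℚ_[p])) (f : (Fin d → ℚ_[p]) → (Fin n → ℚ_[p])) : Prop :=
  IsOpen U ∧ AnalyticOnNhd ℚ_[p] f U ∧ Set.InjOn f U ∧
  (∀ x ∈ U, Function.Injective (fderiv ℚ_[p] f x)) ∧
  (∀ x ∈ U, ∀ V : Set (Fin d → ℚ_[p]), IsOpen V → x ∈ V →
      ∃ W : Set (Fin n → ℚ_[p]), IsOpen W ∧ f x ∈ W ∧ W ∩ f '' U ⊆ f '' (V ∩ U)) ∧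
  ∃ W : Set (Fin n → ℚ_[p]), IsOpen W ∧ M ∩ W = f '' U

/-- `M` is a `d`-dimensional analytic submanifold of `ℚ_p^n`. -/
def IsAnalyticSubmanifold (d n : ℕ) (M : Set (Fin n → ℚ_[p])) : Prop :=
  M.Nonempty ∧ ∀ y ∈ M, ∃ (U : Set (Fin d → ℚ_[p])) (f : (Fin d → ℚ_[p]) → (Fin n → ℚ_[p])),
    IsChart p d n M U f ∧ y ∈ f '' U

/-! For each `i` with `qᵢ' ≠ 0` the hypothesis gives `|qᵢ'| ≤ p^{tᵢ - γT}` and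
`|q₀' + q'·y|_p |qᵢ'| ≤ p^{tᵢ - (1+γ)T}`. Taking `log_p` and summing over these `m` indices
bounds `log_p |q₀' + q'·y|_p` and `log_p Π₊(q̃')` linearly in `σ = Σ_{qᵢ' ≠ 0} tᵢ`. The
exponent comes from eliminating `σ` using `σ ≤ T` and `σ + (k - m)γT ≤ T`, the latter because
at least `k - m` of the indices with `tᵢ ≥ γT` have `qᵢ' = 0`. -/

open Finset Real

theorem le_neg_div_mul_of_linear_bounds {γ T σ a L m k : ℝ} (hγ : 0 ≤ γ) (hT : 0 ≤ T)
    (hm : 1 ≤ m) (hkγ : k * γ < 1) (h1 : m * (T + a) - σ + L ≤ -(m * (γ * T)))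
    (h2 : L ≤ σ - m * (γ * T)) (hσ : σ ≤ T) (hσk : σ + (k - m) * (γ * T) ≤ T) :
    a ≤ -((m * γ + m - k * γ) / (m * (1 - k * γ))) * L := by
  have hD : 0 < m * (1 - k * γ) := by nlinarith
  have hN : 0 ≤ m * γ + m - 1 := by nlinarith
  -- `key` says `σ ≤ T (1/c + mγ)` for the exponent `c`; it follows from `hσ` if `k ≤ m`
  -- and from `hσk` if `m < k`.
  have key : (m * γ + m - k * γ) * σ ≤
      T * (m * (1 - k * γ) + m * γ * (m * γ + m - k * γ)) := by
    rcases le_or_gt k m with hkm | hmk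
    · nlinarith [mul_nonneg (mul_nonneg hT (mul_nonneg (sub_nonneg.2 hkm) hγ)) hN]
    · nlinarith [mul_nonneg (mul_nonneg hT (mul_nonneg (sub_nonneg.2 hmk.le) hγ))
        (sub_nonneg.2 hkγ.le)]
  rw [neg_mul, div_mul_eq_mul_div, le_neg, div_le_iff₀ hD]
  nlinarith [mul_le_mul_of_nonneg_left h1 (sub_nonneg.2 hkγ.le),
    mul_le_mul_of_nonneg_left h2 hN]

theorem card_mul_lt_one {ι : Type*} [Fintype ι] (s : Finset ι) {γ : ℝ} (hγ : 0 ≤ γ)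
    (h : γ < 1 / Fintype.card ι) : (#s : ℝ) * γ < 1 := calc
  (#s : ℝ) * γ ≤ Fintype.card ι * γ := by
    gcongr
    exact_mod_cast card_le_univ s
  _ < 1 := by rwa [lt_div_iff₀ (one_div_pos.1 (hγ.trans_lt h)), mul_comm] at h

theorem sum_add_card_filter_sub_card_mul_le {ι : Type*} [Fintype ι] (t : ι → ℝ)
    (ht : ∀ i, 0 ≤ t i) (I : Finset ι) {c : ℝ} (hc : 0 ≤ c) :
    ∑ i ∈ I, t i + ((#{i | c ≤ t i} : ℝ) - #I) * c ≤ ∑ i, t i := by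
  classical
  set J : Finset ι := {i | c ≤ t i}
  have hcard : (#J : ℝ) - #I ≤ #(J \ I) := by
    rw [sub_le_iff_le_add]
    exact_mod_cast card_le_card_sdiff_add_card
  have hJI : (#(J \ I) : ℝ) * c ≤ ∑ i ∈ Iᶜ, t i := calc
    (#(J \ I) : ℝ) * c ≤ ∑ i ∈ J \ I, t i := by
      simpa using card_nsmul_le_sum (J \ I) t c fun i hi => (mem_filter.1 (mem_sdiff.1 hi).1).2
    _ ≤ ∑ i ∈ Iᶜ, t i := sum_le_sum_of_subset_of_nonneg
      (fun i hi => mem_compl.2 (mem_sdiff.1 hi).2) fun i _ _ => ht i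
  rw [← sum_add_sum_compl I t]
  nlinarith [mul_le_mul_of_nonneg_right hcard hc]

section Logb

variable {b u v w x A : ℝ}

theorem logb_rpow_mul (hb : 1 < b) (hx : x ≠ 0) : logb b (b ^ u * x) = u + logb b x := by
  rw [logb_mul (rpow_pos_of_pos (by linarith) u).ne' hx, logb_rpow (by linarith) hb.ne']

theorem logb_le_add_of_rpow_neg_mul_le (hb : 1 < b) (hx : 0 < x) (h : b ^ (-v) * x ≤ b ^ w) :
    logb b x ≤ v + w := by
  have := (logb_le_iff_le_rpow hb (by positivity)).2 h
  rw [logb_rpow_mul hb hx.ne'] at this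
  linarith

theorem logb_le_of_rpow_mul_mul_rpow_neg_mul_le (hb : 1 < b) (hA : 0 < A) (hx : 0 < x)
    (h : b ^ u * A * (b ^ (-v) * x) ≤ b ^ w) : u + logb b A - v + logb b x ≤ w := by
  have := (logb_le_iff_le_rpow hb (by positivity)).2 h
  rw [mul_assoc, logb_rpow_mul hb (by positivity), logb_mul hA.ne' (by positivity),
    logb_rpow_mul hb hx.ne'] at this
  linarith

end Logb

theorem le_prod_rpow_of_rpow_mul_le {ι : Type*} [Fintype ι] {b γ T A : ℝ} {t x : ι → ℝ}
    {I : Finset ι} (hb : 1 < b) (hγ : 0 ≤ γ) (ht : ∀ i, 0 ≤ t i) (hT : ∑ i, t i ≤ T)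
    (hA : 0 ≤ A) (hI : I.Nonempty) (hx : ∀ i ∈ I, 0 < x i)
    (hkγ : (#{i | γ * T ≤ t i} : ℝ) * γ < 1)
    (h1 : ∀ i ∈ I, b ^ T * A * (b ^ (-t i) * x i) ≤ b ^ (-(γ * T)))
    (h2 : ∀ i ∈ I, b ^ (-t i) * x i ≤ b ^ (-(γ * T))) :
    A ≤ (∏ i ∈ I, x i) ^ (-(((#I : ℝ) * γ + #I - #{i | γ * T ≤ t i} * γ) /
      (#I * (1 - #{i | γ * T ≤ t i} * γ)))) := by
  have hprod : 0 < ∏ i ∈ I, x i := prod_pos hx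
  rcases hA.eq_or_lt with rfl | hA
  · exact rpow_nonneg hprod.le _
  have hsum1 := sum_le_sum fun i hi =>
    logb_le_of_rpow_mul_mul_rpow_neg_mul_le hb hA (hx i hi) (h1 i hi)
  have hsum2 := sum_le_sum fun i hi => logb_le_add_of_rpow_neg_mul_le hb (hx i hi) (h2 i hi)
  simp only [sum_add_distrib, sum_sub_distrib, sum_const, nsmul_eq_mul] at hsum1 hsum2
  have hT0 : 0 ≤ T := (sum_nonneg fun i _ => ht i).trans hT
  have hσ : ∑ i ∈ I, t i ≤ T :=
    (sum_le_sum_of_subset_of_nonneg (subset_univ I) fun i _ _ => ht i).trans hT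
  have hσk := (sum_add_card_filter_sub_card_mul_le t ht I (mul_nonneg hγ hT0)).trans hT
  have hm : (1 : ℝ) ≤ #I := by exact_mod_cast card_pos.2 hI
  rw [← logb_le_logb hb hA (rpow_pos_of_pos hprod _), logb_rpow_eq_mul_logb_of_pos hprod,
    logb_prod _ _ fun i hi => (hx i hi).ne']
  exact le_neg_div_mul_of_linear_bounds hγ hT0 hm hkγ (by linarith) (by linarith) hσ hσk

theorem piPlusQ_eq_prod_filter {m : ℕ} (q : Fin m → ℚ) :
    piPlusQ q = ∏ i ∈ {i | q i ≠ 0}, |(q i : ℝ)| := by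
  rw [piPlusQ, prod_filter]
  exact prod_congr rfl fun i _ => (ite_not _ _ _).symm

theorem statement14_general (p : ℕ) [Fact p.Prime] (n : ℕ) (y : Fin n → ℚ_[p])
    (t : Fin (n + 1) → ℕ)
    (γ : ℝ) (hγ0 : 0 < γ) (hγ1 : γ < 1 / ((n : ℝ) + 1))
    (q : Fin (n + 1) → ℚ) (hq : q ≠ 0)
    (hmax : max
        ((p : ℝ) ^ ((∑ j, t j : ℕ) : ℝ) *
          ‖(q 0 : ℚ_[p]) + ∑ i : Fin n, (q i.succ : ℚ_[p]) * y i‖ *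
            (⨆ i, (p : ℝ) ^ (-((t i : ℝ))) * |(q i : ℝ)|))
        (⨆ i, (p : ℝ) ^ (-((t i : ℝ))) * |(q i : ℝ)|) ≤
      (p : ℝ) ^ (-(γ * ((∑ j, t j : ℕ) : ℝ)))) :
    ‖(q 0 : ℚ_[p]) + ∑ i : Fin n, (q i.succ : ℚ_[p]) * y i‖ ≤
      piPlusQ q ^
        (-((((Finset.univ.filter (fun i : Fin (n + 1) => q i ≠ 0)).card : ℝ) * γ +
            ((Finset.univ.filter (fun i : Fin (n + 1) => q i ≠ 0)).card : ℝ) -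
            ((Finset.univ.filter
              (fun i : Fin (n + 1) => γ * ((∑ j, t j : ℕ) : ℝ) ≤ (t i : ℝ))).card : ℝ) * γ) /
          (((Finset.univ.filter (fun i : Fin (n + 1) => q i ≠ 0)).card : ℝ) *
            (1 - ((Finset.univ.filter
              (fun i : Fin (n + 1) => γ * ((∑ j, t j : ℕ) : ℝ) ≤ (t i : ℝ))).card : ℝ) * γ)))) := by
  have hp : (1 : ℝ) < p := by exact_mod_cast (Fact.out : p.Prime).one_lt
  have hterm (i) : (p : ℝ) ^ (-((t i : ℝ))) * |(q i : ℝ)| ≤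
      ⨆ i, (p : ℝ) ^ (-((t i : ℝ))) * |(q i : ℝ)| :=
    le_ciSup (f := fun i => (p : ℝ) ^ (-((t i : ℝ))) * |(q i : ℝ)|)
      (Set.finite_range _).bddAbove i
  obtain ⟨i₀, hi₀⟩ := Function.ne_iff.1 hq
  rw [piPlusQ_eq_prod_filter]
  exact le_prod_rpow_of_rpow_mul_le hp hγ0.le (fun i => Nat.cast_nonneg _)
    (Nat.cast_sum univ t).symm.le (norm_nonneg _) ⟨i₀, mem_filter.2 ⟨mem_univ _, hi₀⟩⟩
    (fun i hi => abs_pos.2 (Rat.cast_ne_zero.2 (mem_filter.1 hi).2))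
    (card_mul_lt_one _ hγ0.le (by simpa using hγ1))
    (fun i _ => (mul_le_mul_of_nonneg_left (hterm i) (by positivity)).trans
      ((le_max_left _ _).trans hmax))
    (fun i _ => (hterm i).trans ((le_max_right _ _).trans hmax))

/-- Let `y ∈ ℚ_p^n`, `t = (t₀,…,t_n) ∈ ℤ_{≥0}^{n+1}` with `T = Σᵢ tᵢ > 0`,
`0 < γ < 1/(n+1)` and `q̃' = (q₀', q') ≠ 0` with `q₀' ∈ ℤ[1/p]`, `q' ∈ ℤ^n`. If
`max( p^T |q₀' + q'·y|_p · maxᵢ p^{-tᵢ}|qᵢ'|_∞ , maxᵢ p^{-tᵢ}|qᵢ'|_∞ ) ≤ p^{-γT}`,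
`k = #{i : tᵢ ≥ γT}` and `m = #{i : qᵢ' ≠ 0}`, then
`|q₀' + q'·y|_p ≤ Π₊(q̃')^{-(mγ+m-kγ)/(m(1-kγ))}`. -/
theorem statement14 (p : ℕ) [Fact p.Prime] (n : ℕ) (hn : 1 ≤ n) (y : Fin n → ℚ_[p])
    (t : Fin (n + 1) → ℕ) (hT : 0 < ∑ j, t j)
    (γ : ℝ) (hγ0 : 0 < γ) (hγ1 : γ < 1 / ((n : ℝ) + 1))
    (q : Fin (n + 1) → ℚ) (hq0 : IsZInvP p (q 0))
    (hqZ : ∀ i : Fin n, ∃ z : ℤ, q i.succ = (z : ℚ)) (hq : q ≠ 0)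
    (hmax : max
        ((p : ℝ) ^ ((∑ j, t j : ℕ) : ℝ) *
          ‖(q 0 : ℚ_[p]) + ∑ i : Fin n, (q i.succ : ℚ_[p]) * y i‖ *
            (⨆ i, (p : ℝ) ^ (-((t i : ℝ))) * |(q i : ℝ)|))
        (⨆ i, (p : ℝ) ^ (-((t i : ℝ))) * |(q i : ℝ)|) ≤
      (p : ℝ) ^ (-(γ * ((∑ j, t j : ℕ) : ℝ)))) :
    ‖(q 0 : ℚ_[p]) + ∑ i : Fin n, (q i.succ : ℚ_[p]) * y i‖ ≤
      piPlusQ q ^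
        (-((((Finset.univ.filter (fun i : Fin (n + 1) => q i ≠ 0)).card : ℝ) * γ +
            ((Finset.univ.filter (fun i : Fin (n + 1) => q i ≠ 0)).card : ℝ) -
            ((Finset.univ.filter
              (fun i : Fin (n + 1) => γ * ((∑ j, t j : ℕ) : ℝ) ≤ (t i : ℝ))).card : ℝ) * γ) /
          (((Finset.univ.filter (fun i : Fin (n + 1) => q i ≠ 0)).card : ℝ) *
            (1 - ((Finset.univ.filter
              (fun i : Fin (n + 1) => γ * ((∑ j, t j : ℕ) : ℝ) ≤ (t i : ℝ))).card : ℝ) * γ)))) :=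
  statement14_general p n y t γ hγ0 hγ1 q hq hmax

end PadicDioph
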